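/- Let V be a finite-dimensional inner product space, g proper lsc convex, F: dom g → V, and λₖ, λₖ₋₁ > 0, φₖ > 1. Suppose x̄ᵏ = ((φₖ − 1)xᵏ + x̄ᵏ⁻¹)/φₖ, xᵏ⁺¹ = prox_{λₖ g}(x̄ᵏ − λₖ F(xᵏ)), and xᵏ = prox_{λₖ₋₁ g}(x̄ᵏ⁻¹ − λₖ₋₁ F(xᵏ⁻¹)). Then for every x ∈ V: ⟨xᵏ⁺¹ − x̄ᵏ, x − xᵏ⁺¹⟩ + (λₖφₖ/λₖ₋₁)⟨xᵏ − x̄ᵏ, xᵏ⁺¹ − xᵏ⟩ + λₖ⟨F(xᵏ) − F(xᵏ⁻¹), xᵏ − xᵏ⁺¹⟩ ≥ λₖ(⟨F(xᵏ), xᵏ − x⟩ + g(xᵏ) − g(x)). -/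

import Mathlib

/-!
Both iterates are proximal points, so each satisfies the variational inequality
`⟪z - prox z, v - prox z⟫ ≤ λ (g v - g (prox z))`. Test the one for `xᵏ⁺¹` against `x` and
the one for `xᵏ` against `xᵏ⁺¹`, rewrite `x̄ᵏ⁻¹ - xᵏ = φₖ (x̄ᵏ - xᵏ)`, scale the second by
`λₖ / λₖ₋₁` and add: the `g xᵏ⁺¹` terms cancel and what remains is the claim.
-/

open Filter Set Topology

lemma le_of_forall_le_add_mul {a b c : ℝ} (h : ∀ t ∈ Ioc (0 : ℝ) 1, a ≤ b + t * c) : a ≤ b := by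
  have hlim : Tendsto (fun t : ℝ => b + t * c) (𝓝[>] 0) (𝓝 b) := by
    have : Continuous fun t : ℝ => b + t * c := by fun_prop
    simpa using (this.tendsto 0).mono_left nhdsWithin_le_nhds
  exact ge_of_tendsto hlim (eventually_of_mem (Ioc_mem_nhdsGT one_pos) h)

section Prox

variable {V : Type*} [NormedAddCommGroup V] [InnerProductSpace ℝ V]

lemma norm_add_smul_sub_sq (u v z : V) (t : ℝ) :
    ‖u + t • (v - u) - z‖ ^ 2 =
      ‖u - z‖ ^ 2 + 2 * t * inner ℝ (u - z) (v - u) + t ^ 2 * ‖v - u‖ ^ 2 := by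
  rw [show u + t • (v - u) - z = (u - z) + t • (v - u) by abel, norm_add_sq_real,
    real_inner_smul_right, norm_smul, mul_pow, Real.norm_eq_abs, sq_abs]
  ring

theorem ConvexOn.inner_sub_le_of_prox {f : V → ℝ} (hf : ConvexOn ℝ univ f) {u z : V}
    (hu : ∀ w, f u + ‖u - z‖ ^ 2 / 2 ≤ f w + ‖w - z‖ ^ 2 / 2) (v : V) :
    inner ℝ (z - u) (v - u) ≤ f v - f u := by
  refine le_of_forall_le_add_mul (c := ‖v - u‖ ^ 2 / 2) fun t ⟨ht0, ht1⟩ => ?_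
  have hconv : f (u + t • (v - u)) ≤ (1 - t) * f u + t * f v := by
    have := hf.2 (mem_univ u) (mem_univ v) (show 0 ≤ 1 - t by linarith) ht0.le (by ring)
    rwa [show (1 - t) • u + t • v = u + t • (v - u) by module] at this
  have hmin := hu (u + t • (v - u))
  rw [norm_add_smul_sub_sq] at hmin
  have hneg : inner ℝ (z - u) (v - u) = -inner ℝ (u - z) (v - u) := by
    rw [← inner_neg_left, neg_sub]
  refine le_of_mul_le_mul_left ?_ ht0
  linear_combination hmin + hconv + t * hneg

end Prox

theorem graal_key_inequality_general
    {V : Type*} [NormedAddCommGroup V] [InnerProductSpace ℝ V]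
    (g : V → ℝ) (hg : ConvexOn ℝ Set.univ g)
    (F : V → V)
    (lamk lamkm1 phik : ℝ) (hlamk : 0 < lamk) (hlamkm1 : 0 < lamkm1)
    (hphik : 1 < phik)
    (xkm1 xk xk1 xbkm1 xbk : V)
    (hxbk : xbk = phik⁻¹ • ((phik - 1) • xk + xbkm1))
    (hxk1 : ∀ u : V, lamk * g xk1 + ‖xk1 - (xbk - lamk • F xk)‖ ^ 2 / 2 ≤
      lamk * g u + ‖u - (xbk - lamk • F xk)‖ ^ 2 / 2)
    (hxk : ∀ u : V, lamkm1 * g xk + ‖xk - (xbkm1 - lamkm1 • F xkm1)‖ ^ 2 / 2 ≤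
      lamkm1 * g u + ‖u - (xbkm1 - lamkm1 • F xkm1)‖ ^ 2 / 2) :
    ∀ x : V,
      (inner ℝ (xk1 - xbk) (x - xk1) : ℝ) +
        (lamk * phik / lamkm1) * (inner ℝ (xk - xbk) (xk1 - xk) : ℝ) +
        lamk * (inner ℝ (F xk - F xkm1) (xk - xk1) : ℝ) ≥
      lamk * ((inner ℝ (F xk) (xk - x) : ℝ) + g xk - g x) := by
  intro x
  have hxbkm1 : xbkm1 = xk + phik • (xbk - xk) := by
    rw [hxbk, smul_sub, smul_smul, mul_inv_cancel₀ (zero_lt_one.trans hphik).ne']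
    module
  have hI1 := ConvexOn.inner_sub_le_of_prox (hg.smul hlamk.le) hxk1 x
  have hI2 := ConvexOn.inner_sub_le_of_prox (hg.smul hlamkm1.le) hxk xk1
  rw [hxbkm1] at hI2
  rw [ge_iff_le, ← mul_le_mul_iff_of_pos_left hlamkm1, mul_add, mul_add,
    ← mul_assoc lamkm1 (lamk * phik / lamkm1), mul_div_cancel₀ _ hlamkm1.ne']
  simp only [smul_eq_mul, inner_sub_left, inner_sub_right, inner_add_left,
    real_inner_smul_left] at hI1 hI2 ⊢
  linear_combination lamkm1 * hI1 + lamk * hI2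

/-- Key inequality (7) in the proof of Theorem 1: combining the prox
characterizations of `xᵏ⁺¹` and `xᵏ` with `x̄ᵏ = ((φₖ-1)xᵏ + x̄ᵏ⁻¹)/φₖ`. -/
theorem graal_key_inequality
    {V : Type*} [NormedAddCommGroup V] [InnerProductSpace ℝ V]
    [FiniteDimensional ℝ V]
    (g : V → ℝ) (hg : ConvexOn ℝ Set.univ g) (hlsc : LowerSemicontinuous g)
    (F : V → V)
    (lamk lamkm1 phik : ℝ) (hlamk : 0 < lamk) (hlamkm1 : 0 < lamkm1)
    (hphik : 1 < phik)
    (xkm1 xk xk1 xbkm1 xbk : V)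
    (hxbk : xbk = phik⁻¹ • ((phik - 1) • xk + xbkm1))
    (hxk1 : ∀ u : V, lamk * g xk1 + ‖xk1 - (xbk - lamk • F xk)‖ ^ 2 / 2 ≤
      lamk * g u + ‖u - (xbk - lamk • F xk)‖ ^ 2 / 2)
    (hxk : ∀ u : V, lamkm1 * g xk + ‖xk - (xbkm1 - lamkm1 • F xkm1)‖ ^ 2 / 2 ≤
      lamkm1 * g u + ‖u - (xbkm1 - lamkm1 • F xkm1)‖ ^ 2 / 2) :
    ∀ x : V,
      (inner ℝ (xk1 - xbk) (x - xk1) : ℝ) +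
        (lamk * phik / lamkm1) * (inner ℝ (xk - xbk) (xk1 - xk) : ℝ) +
        lamk * (inner ℝ (F xk - F xkm1) (xk - xk1) : ℝ) ≥
      lamk * ((inner ℝ (F xk) (xk - x) : ℝ) + g xk - g x) :=
  graal_key_inequality_general g hg F lamk lamkm1 phik hlamk hlamkm1 hphik xkm1 xk xk1 xbkm1 xbk
    hxbk hxk1 hxk
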